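/- For any two polytopes P and Q in ℝ^d, the diameter of their Minkowski sum satisfies δ(P + Q) ≥ max{δ(P), δ(Q)}. -/

import Mathlib

open Pointwise
open scoped RealInnerProductSpace

noncomputable section

abbrev Esp (d : ℕ) := EuclideanSpace ℝ (Fin d)

def IsPolytope {d : ℕ} (P : Set (Esp d)) : Prop :=
  ∃ s : Finset (Esp d), s.Nonempty ∧ P = convexHull ℝ (s : Set (Esp d))

def polyFace {d : ℕ} (P : Set (Esp d)) (c : Esp d) : Set (Esp d) :=
  {x | x ∈ P ∧ ∀ y ∈ P, ⟪c, x⟫ ≤ ⟪c, y⟫}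

def polyVerts {d : ℕ} (P : Set (Esp d)) : Set (Esp d) :=
  Set.extremePoints ℝ P

def f0 {d : ℕ} (P : Set (Esp d)) : ℕ := (polyVerts P).ncard

def polyAdj {d : ℕ} (P : Set (Esp d)) (u v : Esp d) : Prop :=
  u ≠ v ∧ u ∈ polyVerts P ∧ v ∈ polyVerts P ∧
    ∃ c : Esp d, polyFace P c = segment ℝ u v

def polyGraph {d : ℕ} (P : Set (Esp d)) : SimpleGraph (Esp d) where
  Adj u v := polyAdj P u v
  symm := ⟨by
    rintro u v ⟨hne, hu, hv, c, hc⟩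
    exact ⟨hne.symm, hv, hu, c, by rw [hc, segment_symm]⟩⟩
  loopless := ⟨by rintro u ⟨hne, -⟩; exact hne rfl⟩

def polyDiam {d : ℕ} (P : Set (Esp d)) : ℕ :=
  sSup {n : ℕ | ∃ u ∈ polyVerts P, ∃ v ∈ polyVerts P, n = (polyGraph P).dist u v}

def polyDim {d : ℕ} (P : Set (Esp d)) : ℕ :=
  Module.finrank ℝ (affineSpan ℝ P).direction

def IsFace {d : ℕ} (P F : Set (Esp d)) : Prop := ∃ c : Esp d, polyFace P c = F

def gammaVerts {d : ℕ} (P Q : Set (Esp d)) (u : Esp d) : Set (Esp d) :=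
  {w ∈ polyVerts (P + Q) | ∃ v ∈ polyVerts Q, w = u + v}

/-!
Every vertex `u` of `P` lifts to a vertex `u + q` of `P + Q`: expose `u` by a functional `c` and
take for `q` a vertex of the face of `Q` in direction `c`. Faces of `P + Q` are sums of faces, so
an edge of `P + Q` projects to an edge or to a single vertex of `P`, and a shortest path between
two lifts projects to a walk in the graph of `P` that is no longer.

This needs the graph of the polytope `P + Q` to be connected, which is proved by induction on the
number of points spanning the polytope. Walk downhill along a functional `c` exposing the target
vertex: for a vertex `x`, rotate a functional exposing `x` towards `c` until some vertex lower
than `x` ties with it; the resulting face is proper, contains `x` and a lower vertex, and its graph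
is a subgraph of the graph of the polytope.
-/

open Filter Topology

section Convex

variable {E : Type*} [AddCommGroup E] [Module ℝ E]

lemma collinear_convexHull_iff {s : Set E} : Collinear ℝ (convexHull ℝ s) ↔ Collinear ℝ s := by
  rw [Collinear, Collinear, ← direction_affineSpan, affineSpan_convexHull, direction_affineSpan]

lemma collinear_segment (a b : E) : Collinear ℝ (segment ℝ a b) := by
  rw [← convexHull_pair, collinear_convexHull_iff]
  exact collinear_pair ℝ a b

lemma Convex.eq_segment_of_collinear {K : Set E} (hK : Convex ℝ K) (hcol : Collinear ℝ K)
    {a b : E} (ha : a ∈ K.extremePoints ℝ) (hb : b ∈ K.extremePoints ℝ) (hab : a ≠ b) :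
    K = segment ℝ a b := by
  refine subset_antisymm (fun k hk => ?_) (hK.segment_subset ha.1 hb.1)
  have habk : Collinear ℝ ({a, b, k} : Set E) :=
    hcol.subset (Set.insert_subset_iff.2 ⟨ha.1, Set.pair_subset hb.1 hk⟩)
  rcases habk.wbtw_or_wbtw_or_wbtw with h | h | h <;> rw [Wbtw, affineSegment_eq_segment] at h
  · rcases (mem_extremePoints_iff_forall_segment.1 hb).2 a ha.1 k hk h with rfl | rfl
    · exact absurd rfl hab
    · exact right_mem_segment ℝ _ _
  · rwa [segment_symm]
  · rcases (mem_extremePoints_iff_forall_segment.1 ha).2 k hk b hb.1 h with rfl | rfl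
    · exact left_mem_segment ℝ _ _
    · exact absurd rfl hab

lemma mem_extremePoints_of_add_mem_extremePoints_add {P Q : Set E} {p q : E}
    (hpq : p + q ∈ (P + Q).extremePoints ℝ) (hp : p ∈ P) (hq : q ∈ Q) :
    p ∈ P.extremePoints ℝ := by
  refine mem_extremePoints_iff_forall_segment.2 ⟨hp, fun a ha b hb hpab => ?_⟩
  have hseg : p + q ∈ segment ℝ (a + q) (b + q) := by
    simpa only [add_comm _ q] using (mem_segment_translate ℝ q).2 hpab
  simpa using (mem_extremePoints_iff_forall_segment.1 hpq).2 _ (Set.add_mem_add ha hq) _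
    (Set.add_mem_add hb hq) hseg

lemma eq_of_add_eq_add_of_mem_extremePoints_add {P Q : Set E} {p p' q q' : E}
    (hpq : p + q ∈ (P + Q).extremePoints ℝ) (hp : p ∈ P) (hq : q ∈ Q) (hp' : p' ∈ P)
    (hq' : q' ∈ Q) (h : p + q = p' + q') : p = p' := by
  have hmid : p + q ∈ segment ℝ (p + q') (p' + q) := by
    refine ⟨1 / 2, 1 / 2, by norm_num, by norm_num, by norm_num, ?_⟩
    rw [← smul_add, show p + q' + (p' + q) = p + q + (p' + q') by abel, ← h, ← two_smul ℝ,
      smul_smul]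
    norm_num
  rcases (mem_extremePoints_iff_forall_segment.1 hpq).2 _ (Set.add_mem_add hp hq') _
    (Set.add_mem_add hp' hq) hmid with h' | h'
  · rw [h] at h'
    exact add_right_cancel h'
  · exact (add_right_cancel h').symm

end Convex

lemma SimpleGraph.reachable_of_forall_exists_lt_reachable {V β : Type*} [LinearOrder β]
    (G : SimpleGraph V) {S : Set V} (hS : S.Finite) (f : V → β) {v : V}
    (h : ∀ x ∈ S, x ≠ v → ∃ y ∈ S, f y < f x ∧ G.Reachable x y) :
    ∀ x ∈ S, G.Reachable x v := by
  by_contra! hbad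
  obtain ⟨x, ⟨hxS, hx⟩, hmin⟩ :=
    Set.exists_min_image {x ∈ S | ¬ G.Reachable x v} f (hS.subset (Set.sep_subset _ _)) hbad
  obtain ⟨y, hyS, hyx, hxy⟩ := h x hxS (by rintro rfl; exact hx .rfl)
  exact hx (hxy.trans (by_contra fun hy => (hmin y ⟨hyS, hy⟩).not_gt hyx))

lemma eventually_add_mul_nonpos_iff (a b : ℝ) :
    ∀ᶠ ε in 𝓝[>] (0 : ℝ), (a + ε * b ≤ 0 ↔ a < 0 ∨ a = 0 ∧ b ≤ 0) := by
  have hlim : Tendsto (fun ε => a + ε * b) (𝓝[>] 0) (𝓝 a) := by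
    have hcont : Continuous fun ε : ℝ => a + ε * b := by fun_prop
    simpa using (hcont.tendsto 0).mono_left nhdsWithin_le_nhds
  rcases lt_trichotomy a 0 with ha | rfl | ha
  · filter_upwards [hlim.eventually (gt_mem_nhds ha)] with ε hε
    simp [ha, hε.le]
  · filter_upwards [self_mem_nhdsWithin] with ε (hε : 0 < ε)
    simp [mul_nonpos_iff_pos_imp_nonpos, hε, hε.le]
  · filter_upwards [hlim.eventually (lt_mem_nhds ha)] with ε hε
    simp [ha.not_gt, ha.ne', hε.not_ge]

section Polytope

variable {d : ℕ}

lemma isExposed_polyFace (P : Set (Esp d)) (c : Esp d) : IsExposed ℝ P (polyFace P c) :=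
  fun _ => ⟨-innerSL ℝ c, by ext x; simp [polyFace]⟩

lemma extremePoints_polyFace_subset (P : Set (Esp d)) (c : Esp d) :
    (polyFace P c).extremePoints ℝ ⊆ P.extremePoints ℝ :=
  (isExposed_polyFace P c).isExtreme.extremePoints_subset_extremePoints

lemma extremePoints_polyFace_nonempty {K : Set (Esp d)} (hK : IsCompact K) (hne : K.Nonempty)
    (c : Esp d) : ((polyFace K c).extremePoints ℝ).Nonempty := by
  obtain ⟨x, hx, hmin⟩ := hK.exists_isMinOn hne (innerSL ℝ c).continuous.continuousOn
  exact ((isExposed_polyFace K c).isCompact hK).extremePoints_nonempty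
    ⟨x, hx, fun y hy => isMinOn_iff.1 hmin y hy⟩

lemma polyFace_zero (P : Set (Esp d)) : polyFace P 0 = P := by
  ext x
  simp [polyFace]

lemma add_mem_polyFace_add_iff {P Q : Set (Esp d)} {c p q : Esp d} (hp : p ∈ P) (hq : q ∈ Q) :
    p + q ∈ polyFace (P + Q) c ↔ p ∈ polyFace P c ∧ q ∈ polyFace Q c := by
  constructor
  · rintro ⟨-, h⟩
    refine ⟨⟨hp, fun y hy => ?_⟩, ⟨hq, fun y hy => ?_⟩⟩
    · have := h _ (Set.add_mem_add hy hq)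
      rw [inner_add_right, inner_add_right] at this
      linarith
    · have := h _ (Set.add_mem_add hp hy)
      rw [inner_add_right, inner_add_right] at this
      linarith
  · rintro ⟨⟨-, hpmin⟩, ⟨-, hqmin⟩⟩
    refine ⟨Set.add_mem_add hp hq, ?_⟩
    rintro _ ⟨y, hy, z, hz, rfl⟩
    rw [inner_add_right, inner_add_right]
    exact add_le_add (hpmin y hy) (hqmin z hz)

lemma mem_polyFace_convexHull_iff {s : Set (Esp d)} {c y : Esp d} (hy : y ∈ convexHull ℝ s) :
    y ∈ polyFace (convexHull ℝ s) c ↔ ∀ z ∈ s, ⟪c, y⟫ ≤ ⟪c, z⟫ :=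
  ⟨fun h z hz => h.2 z (subset_convexHull ℝ s hz), fun h =>
    ⟨hy, fun _ hz => convexHull_min h (convex_halfSpace_ge (innerₛₗ ℝ c).isLinear ⟪c, y⟫) hz⟩⟩

open Classical in
def minimizers (s : Finset (Esp d)) (c : Esp d) : Finset (Esp d) :=
  {y ∈ s | ∀ z ∈ s, ⟪c, y⟫ ≤ ⟪c, z⟫}

lemma mem_minimizers {s : Finset (Esp d)} {c y : Esp d} :
    y ∈ minimizers s c ↔ y ∈ s ∧ ∀ z ∈ s, ⟪c, y⟫ ≤ ⟪c, z⟫ := by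
  classical
  simp [minimizers]

lemma minimizers_subset (s : Finset (Esp d)) (c : Esp d) : minimizers s c ⊆ s :=
  fun _ hy => (mem_minimizers.1 hy).1

lemma minimizers_eq_singleton {s : Finset (Esp d)} {c x : Esp d} (hx : x ∈ s)
    (hc : ∀ y ∈ s, y ≠ x → ⟪c, x⟫ < ⟪c, y⟫) : minimizers s c = {x} := by
  ext y
  rw [mem_minimizers, Finset.mem_singleton]
  refine ⟨fun ⟨hy, hmin⟩ => by_contra fun hyx => (hc y hy hyx).not_ge (hmin x hx), ?_⟩
  rintro rfl
  exact ⟨hx, fun z hz => (eq_or_ne z y).elim (fun h => h ▸ le_rfl) fun h => (hc z hz h).le⟩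

lemma polyFace_convexHull (s : Finset (Esp d)) (c : Esp d) :
    polyFace (convexHull ℝ (s : Set (Esp d))) c = convexHull ℝ (minimizers s c : Set (Esp d)) := by
  have hexp := isExposed_polyFace (convexHull ℝ (s : Set (Esp d))) c
  have hconv := hexp.convex (convex_convexHull ℝ _)
  refine subset_antisymm ?_ (convexHull_min (fun y hy => ?_) hconv)
  · -- Krein–Milman: the face is the closed convex hull of its vertices, which are minimizers.
    rw [← closure_convexHull_extremePoints (hexp.isCompact (s.finite_toSet.isCompact_convexHull ℝ))
      hconv]
    refine closure_minimal (convexHull_mono fun y hy => ?_)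
      ((minimizers s c).finite_toSet.isCompact_convexHull ℝ).isClosed
    have hys : y ∈ s := extremePoints_convexHull_subset (extremePoints_polyFace_subset _ c hy)
    exact mem_minimizers.2 ⟨hys, (mem_polyFace_convexHull_iff (subset_convexHull ℝ _ hys)).1 hy.1⟩
  · have hys := minimizers_subset s c hy
    exact (mem_polyFace_convexHull_iff (subset_convexHull ℝ _ hys)).2 (mem_minimizers.1 hy).2

lemma exists_minimizers_add_smul (s : Finset (Esp d)) (c c' : Esp d) :
    ∃ ε : ℝ, minimizers s (c + ε • c') = minimizers (minimizers s c) c' := by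
  -- For small `ε > 0`, `⟪c + ε • c', ·⟫` orders `s` lexicographically by `⟪c, ·⟫`, then `⟪c', ·⟫`.
  have hlex : ∀ᶠ ε in 𝓝[>] (0 : ℝ), ∀ y ∈ s, ∀ z ∈ s,
      (⟪c + ε • c', y⟫ ≤ ⟪c + ε • c', z⟫ ↔
        ⟪c, y⟫ < ⟪c, z⟫ ∨ ⟪c, y⟫ = ⟪c, z⟫ ∧ ⟪c', y⟫ ≤ ⟪c', z⟫) := by
    simp only [eventually_all_finset]
    intro y _ z _
    filter_upwards [eventually_add_mul_nonpos_iff (⟪c, y⟫ - ⟪c, z⟫) (⟪c', y⟫ - ⟪c', z⟫)] with ε hε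
    rw [inner_add_left, inner_add_left, real_inner_smul_left, real_inner_smul_left,
      ← sub_neg, ← sub_eq_zero (a := ⟪c, y⟫), ← sub_nonpos (a := ⟪c', y⟫), ← hε]
    constructor <;> intro h <;> linarith
  obtain ⟨ε, hε⟩ := hlex.exists
  refine ⟨ε, Finset.ext fun y => ?_⟩
  simp only [mem_minimizers]
  constructor
  · rintro ⟨hy, hmin⟩
    refine ⟨⟨hy, fun z hz => ?_⟩, fun z ⟨hz, hzmin⟩ => ?_⟩
    · rcases (hε y hy z hz).1 (hmin z hz) with h | h
      exacts [h.le, h.1.le]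
    · rcases (hε y hy z hz).1 (hmin z hz) with h | h
      exacts [absurd (hzmin y hy) h.not_ge, h.2]
  · rintro ⟨⟨hy, hc⟩, hc'⟩
    refine ⟨hy, fun z hz => (hε y hy z hz).2 ?_⟩
    rcases (hc z hz).lt_or_eq with h | h
    · exact Or.inl h
    · exact Or.inr ⟨h, hc' z ⟨hz, fun w hw => h ▸ hc w hw⟩⟩

lemma polyGraph_minimizers_le (s : Finset (Esp d)) (c : Esp d) :
    polyGraph (convexHull ℝ (minimizers s c : Set (Esp d))) ≤
      polyGraph (convexHull ℝ (s : Set (Esp d))) := by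
  rintro a b ⟨hab, ha, hb, c', hc'⟩
  rw [← polyFace_convexHull] at ha hb
  obtain ⟨ε, hε⟩ := exists_minimizers_add_smul s c c'
  refine ⟨hab, extremePoints_polyFace_subset _ c ha, extremePoints_polyFace_subset _ c hb,
    c + ε • c', ?_⟩
  rw [polyFace_convexHull, hε, ← polyFace_convexHull, hc']

lemma exists_forall_inner_lt_of_mem_extremePoints {s : Finset (Esp d)} {x : Esp d}
    (hx : x ∈ (convexHull ℝ (s : Set (Esp d))).extremePoints ℝ) :
    ∃ c : Esp d, ∀ y ∈ s, y ≠ x → ⟪c, x⟫ < ⟪c, y⟫ := by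
  classical
  have hnot : x ∉ convexHull ℝ ((s.erase x : Finset (Esp d)) : Set (Esp d)) := fun hmem =>
    ((convex_convexHull ℝ _).mem_extremePoints_iff_mem_sdiff_convexHull_sdiff.1 hx).2 <|
      convexHull_mono (fun y hy => by
        simp only [Finset.coe_erase, Set.mem_sdiff, Set.mem_singleton_iff] at hy ⊢
        exact ⟨subset_convexHull ℝ _ hy.1, hy.2⟩) hmem
  obtain ⟨f, u, hfx, hfy⟩ := geometric_hahn_banach_point_closed (convex_convexHull ℝ _)
    ((s.erase x).finite_toSet.isCompact_convexHull ℝ).isClosed hnot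
  refine ⟨(InnerProductSpace.toDual ℝ (Esp d)).symm f, fun y hy hyx => ?_⟩
  rw [InnerProductSpace.toDual_symm_apply, InnerProductSpace.toDual_symm_apply]
  exact hfx.trans (hfy y (subset_convexHull ℝ _ (by simp [hyx, hy])))

lemma exists_forall_inner_lt_notMem_of_mem_extremePoints {s : Finset (Esp d)} {x : Esp d}
    (hx : x ∈ (convexHull ℝ (s : Set (Esp d))).extremePoints ℝ) {S : Submodule ℝ (Esp d)}
    (hS : S ≠ ⊤) : ∃ c ∉ S, ∀ y ∈ s, y ≠ x → ⟪c, x⟫ < ⟪c, y⟫ := by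
  -- The functionals exposing `x` form a nonempty open set, which no proper subspace contains.
  set U := {c : Esp d | ∀ y ∈ s, y ≠ x → ⟪c, x⟫ < ⟪c, y⟫}
  have hU : IsOpen U := by
    simp only [U, Set.ofPred_forall]
    exact isOpen_biInter_finset fun y _ => isOpen_iInter_of_finite fun _ =>
      isOpen_lt (by fun_prop) (by fun_prop)
  by_contra h
  obtain ⟨c, hc⟩ := exists_forall_inner_lt_of_mem_extremePoints hx
  exact hS (S.eq_top_of_nonempty_interior'
    ⟨c, interior_maximal (fun c' hc' => by_contra fun hc'S => h ⟨c', hc'S, hc'⟩) hU hc⟩)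

lemma exists_minimizers_add_smul_inner_lt {s : Finset (Esp d)} {a b x w : Esp d}
    (hx : x ∈ minimizers s a) (hw : w ∈ s) (hwx : ⟪b, w⟫ < ⟪b, x⟫) :
    ∃ t : ℝ, x ∈ minimizers s (a + t • b) ∧
      ∃ y ∈ minimizers s (a + t • b), ⟪b, y⟫ < ⟪b, x⟫ := by
  classical
  obtain ⟨hxs, hxa⟩ := mem_minimizers.1 hx
  -- `r y` is the `t` at which `y` ties with `x`; take the least one among the points below `x`.
  set r : Esp d → ℝ := fun y => (⟪a, y⟫ - ⟪a, x⟫) / (⟪b, x⟫ - ⟪b, y⟫)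
  obtain ⟨y, hy, hymin⟩ := (s.filter fun y => ⟪b, y⟫ < ⟪b, x⟫).exists_min_image r
    ⟨w, Finset.mem_filter.2 ⟨hw, hwx⟩⟩
  obtain ⟨hys, hyx⟩ := Finset.mem_filter.1 hy
  have ht : 0 ≤ r y := div_nonneg (sub_nonneg.2 (hxa y hys)) (sub_nonneg.2 hyx.le)
  have hval : ∀ z, ⟪a + r y • b, z⟫ = ⟪a, z⟫ + r y * ⟪b, z⟫ := fun z => by
    rw [inner_add_left, real_inner_smul_left]
  have hxmin : ∀ z ∈ s, ⟪a + r y • b, x⟫ ≤ ⟪a + r y • b, z⟫ := by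
    intro z hz
    rw [hval, hval]
    rcases lt_or_ge ⟪b, z⟫ ⟪b, x⟫ with hzx | hzx
    · have := (le_div_iff₀ (sub_pos.2 hzx)).1 (hymin z (Finset.mem_filter.2 ⟨hz, hzx⟩))
      linarith
    · nlinarith [hxa z hz]
  have hyval : ⟪a + r y • b, y⟫ = ⟪a + r y • b, x⟫ := by
    have := div_mul_cancel₀ (⟪a, y⟫ - ⟪a, x⟫) (sub_pos.2 hyx).ne'
    rw [hval, hval]
    linarith
  exact ⟨r y, mem_minimizers.2 ⟨hxs, hxmin⟩, y,
    mem_minimizers.2 ⟨hys, fun z hz => hyval ▸ hxmin z hz⟩, hyx⟩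

lemma mem_orthogonal_vectorSpan_of_minimizers_eq_self {s : Finset (Esp d)} {c : Esp d}
    (h : minimizers s c = s) : c ∈ (vectorSpan ℝ (s : Set (Esp d)))ᗮ := by
  have hle : ∀ y ∈ s, ∀ z ∈ s, ⟪c, y⟫ ≤ ⟪c, z⟫ := fun y hy =>
    (mem_minimizers.1 (by rw [h]; exact hy)).2
  rw [Submodule.mem_orthogonal', vectorSpan_def]
  intro v hv
  induction hv using Submodule.span_induction with
  | mem v hv =>
    obtain ⟨y, hy, z, hz, rfl⟩ := hv
    change ⟪c, y - z⟫ = 0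
    rw [inner_sub_right]
    linarith [hle y hy z hz, hle z hz y hy]
  | zero => exact inner_zero_right c
  | add u v _ _ hu hv => rw [inner_add_right, hu, hv, add_zero]
  | smul r v _ hv => rw [real_inner_smul_right, hv, mul_zero]

lemma span_singleton_sup_orthogonal_vectorSpan_ne_top {s : Set (Esp d)} (hs : ¬ Collinear ℝ s)
    (c : Esp d) : (ℝ ∙ c) ⊔ (vectorSpan ℝ s)ᗮ ≠ ⊤ := by
  intro htop
  apply hs
  rw [collinear_iff_finrank_le_one]
  have hsup := Submodule.finrank_add_le_finrank_add_finrank (ℝ ∙ c) (vectorSpan ℝ s)ᗮ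
  have hc : Module.finrank ℝ (ℝ ∙ c) ≤ 1 := by
    simpa using finrank_span_le_card ({c} : Set (Esp d))
  rw [htop, finrank_top] at hsup
  have := (vectorSpan ℝ s).finrank_add_finrank_orthogonal
  omega

def PolyConnected (P : Set (Esp d)) : Prop :=
  ∀ u ∈ polyVerts P, ∀ v ∈ polyVerts P, (polyGraph P).Reachable u v

lemma exists_reachable_inner_lt {s : Finset (Esp d)}
    (ih : ∀ t ⊂ s, PolyConnected (convexHull ℝ (t : Set (Esp d))))
    (hcol : ¬ Collinear ℝ (s : Set (Esp d))) {c x w : Esp d}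
    (hx : x ∈ polyVerts (convexHull ℝ (s : Set (Esp d)))) (hw : w ∈ s) (hwx : ⟪c, w⟫ < ⟪c, x⟫) :
    ∃ y ∈ polyVerts (convexHull ℝ (s : Set (Esp d))), ⟪c, y⟫ < ⟪c, x⟫ ∧
      (polyGraph (convexHull ℝ (s : Set (Esp d)))).Reachable x y := by
  have hxs : x ∈ s := extremePoints_convexHull_subset hx
  obtain ⟨a, haS, ha⟩ := exists_forall_inner_lt_notMem_of_mem_extremePoints hx
    (span_singleton_sup_orthogonal_vectorSpan_ne_top hcol c)
  obtain ⟨t, hxt, y₀, hy₀t, hy₀x⟩ := exists_minimizers_add_smul_inner_lt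
    (by rw [minimizers_eq_singleton hxs ha]; exact Finset.mem_singleton_self x) hw hwx
  set F := minimizers s (a + t • c)
  -- The face `F` is proper because `a` was chosen off `ℝ ∙ c ⊔ (vectorSpan ℝ s)ᗮ`.
  have hFs : F ⊂ s := by
    refine (minimizers_subset s _).ssubset_of_ne fun hF => haS ?_
    rw [show a = (a + t • c) + (-t) • c by module]
    exact Submodule.add_mem _ (Submodule.mem_sup_right
      (mem_orthogonal_vectorSpan_of_minimizers_eq_self hF))
      (Submodule.mem_sup_left (Submodule.smul_mem _ _ (Submodule.mem_span_singleton_self c)))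
  obtain ⟨y, hy⟩ := extremePoints_polyFace_nonempty (F.finite_toSet.isCompact_convexHull ℝ)
    ⟨x, subset_convexHull ℝ _ hxt⟩ c
  have hyF := extremePoints_polyFace_subset _ c hy
  have hxF : x ∈ polyVerts (convexHull ℝ (F : Set (Esp d))) :=
    inter_extremePoints_subset_extremePoints_of_subset
      (convexHull_mono (Finset.coe_subset.2 (minimizers_subset s _)))
      ⟨subset_convexHull ℝ _ hxt, hx⟩
  refine ⟨y, extremePoints_polyFace_subset _ (a + t • c) (by rwa [polyFace_convexHull]),
    (hy.1.2 y₀ (subset_convexHull ℝ _ hy₀t)).trans_lt hy₀x,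
    (ih F hFs x hxF y hyF).mono (polyGraph_minimizers_le s _)⟩

theorem polyConnected_convexHull (s : Finset (Esp d)) :
    PolyConnected (convexHull ℝ (s : Set (Esp d))) := by
  induction s using Finset.strongInduction with
  | H s ih =>
  intro u hu v hv
  by_cases hcol : Collinear ℝ (s : Set (Esp d))
  · rcases eq_or_ne u v with rfl | huv
    · rfl
    have hseg := (convex_convexHull ℝ _).eq_segment_of_collinear
      (collinear_convexHull_iff.2 hcol) hu hv huv
    exact SimpleGraph.Adj.reachable ⟨huv, hu, hv, 0, by rw [polyFace_zero, hseg]⟩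
  · obtain ⟨c, hc⟩ := exists_forall_inner_lt_of_mem_extremePoints hv
    have hvs : v ∈ s := extremePoints_convexHull_subset hv
    refine SimpleGraph.reachable_of_forall_exists_lt_reachable _
      (s.finite_toSet.subset extremePoints_convexHull_subset) (fun y => ⟪c, y⟫)
      (fun x hx hxv => ?_) u hu
    exact exists_reachable_inner_lt ih hcol hx hvs (hc x (extremePoints_convexHull_subset hx) hxv)

lemma exists_add_mem_polyVerts_add {sP : Finset (Esp d)} {Q : Set (Esp d)} {u : Esp d}
    (hu : u ∈ polyVerts (convexHull ℝ (sP : Set (Esp d)))) (hQ : IsCompact Q) (hQne : Q.Nonempty) :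
    ∃ q ∈ Q, u + q ∈ polyVerts (convexHull ℝ (sP : Set (Esp d)) + Q) := by
  obtain ⟨c, hc⟩ := exists_forall_inner_lt_of_mem_extremePoints hu
  have hPc : polyFace (convexHull ℝ (sP : Set (Esp d))) c = {u} := by
    rw [polyFace_convexHull, minimizers_eq_singleton (extremePoints_convexHull_subset hu) hc,
      Finset.coe_singleton, convexHull_singleton]
  obtain ⟨q, hq⟩ := extremePoints_polyFace_nonempty hQ hQne c
  have hu : u ∈ polyFace (convexHull ℝ (sP : Set (Esp d))) c := hPc ▸ rfl
  -- The face of the sum in direction `c` is the translate `u + polyFace Q c`.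
  refine ⟨q, hq.1.1, extremePoints_polyFace_subset _ c (mem_extremePoints_iff_forall_segment.2
    ⟨(add_mem_polyFace_add_iff hu.1 hq.1.1).2 ⟨hu, hq.1⟩, ?_⟩)⟩
  rintro _ hz₁ _ hz₂ hseg
  obtain ⟨p₁, hp₁, q₁, hq₁, rfl⟩ := Set.mem_add.1 hz₁.1
  obtain ⟨p₂, hp₂, q₂, hq₂, rfl⟩ := Set.mem_add.1 hz₂.1
  obtain ⟨hp₁F, hq₁F⟩ := (add_mem_polyFace_add_iff hp₁ hq₁).1 hz₁
  obtain ⟨hp₂F, hq₂F⟩ := (add_mem_polyFace_add_iff hp₂ hq₂).1 hz₂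
  rw [hPc] at hp₁F hp₂F
  subst hp₁F hp₂F
  simpa using (mem_extremePoints_iff_forall_segment.1 hq).2 q₁ hq₁F q₂ hq₂F
    ((mem_segment_translate ℝ _).1 hseg)

lemma eq_or_polyAdj_of_polyAdj_add {P Q : Set (Esp d)} (hP : Convex ℝ P) {p₁ p₂ q₁ q₂ : Esp d}
    (hp₁ : p₁ ∈ P) (hq₁ : q₁ ∈ Q) (hp₂ : p₂ ∈ P) (hq₂ : q₂ ∈ Q)
    (hadj : polyAdj (P + Q) (p₁ + q₁) (p₂ + q₂)) : p₁ = p₂ ∨ polyAdj P p₁ p₂ := by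
  obtain ⟨-, hw₁, hw₂, c, hc⟩ := hadj
  refine or_iff_not_imp_left.2 fun hne => ?_
  have hF₁ := (add_mem_polyFace_add_iff hp₁ hq₁).1 (hc ▸ left_mem_segment ℝ _ _)
  have hF₂ := (add_mem_polyFace_add_iff hp₂ hq₂).1 (hc ▸ right_mem_segment ℝ _ _)
  have hexp := isExposed_polyFace P c
  -- Translating by `q₁` embeds the face of `P` into the edge of `P + Q`.
  have hcol : Collinear ℝ (polyFace P c) := by
    refine (collinear_segment p₁ (p₂ + q₂ - q₁)).subset fun f hf => ?_
    have hfq := (add_mem_polyFace_add_iff hf.1 hq₁).2 ⟨hf, hF₁.2⟩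
    rw [hc] at hfq
    rw [← mem_segment_translate ℝ q₁, add_sub_cancel, add_comm q₁ f, add_comm q₁ p₁]
    exact hfq
  have hext : ∀ {p q}, p ∈ polyFace P c → q ∈ Q → p + q ∈ polyVerts (P + Q) →
      p ∈ (polyFace P c).extremePoints ℝ := fun hp hq hpq => by
    rw [hexp.isExtreme.extremePoints_eq]
    exact ⟨hp, mem_extremePoints_of_add_mem_extremePoints_add hpq hp.1 hq⟩
  exact ⟨hne, (extremePoints_polyFace_subset P c) (hext hF₁.1 hq₁ hw₁),
    (extremePoints_polyFace_subset P c) (hext hF₂.1 hq₂ hw₂), c,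
    (hexp.convex hP).eq_segment_of_collinear hcol (hext hF₁.1 hq₁ hw₁) (hext hF₂.1 hq₂ hw₂) hne⟩

lemma exists_walk_length_le_of_walk_add {P Q : Set (Esp d)} (hP : Convex ℝ P) {w w' : Esp d}
    (W : (polyGraph (P + Q)).Walk w w') (hw' : w' ∈ polyVerts (P + Q)) {p q p' q' : Esp d}
    (hp : p ∈ P) (hq : q ∈ Q) (hp' : p' ∈ P) (hq' : q' ∈ Q) (hw : w = p + q)
    (hpq' : w' = p' + q') : ∃ W' : (polyGraph P).Walk p p', W'.length ≤ W.length := by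
  induction W generalizing p q with
  | nil =>
    subst hw
    rw [eq_of_add_eq_add_of_mem_extremePoints_add hw' hp hq hp' hq' hpq']
    exact ⟨.nil, le_rfl⟩
  | cons h W ih =>
    subst hw
    obtain ⟨p₁, hp₁, q₁, hq₁, rfl⟩ := Set.mem_add.1 h.2.2.1.1
    obtain ⟨W', hW'⟩ := ih hw' hp₁ hq₁ rfl hpq'
    rcases eq_or_polyAdj_of_polyAdj_add hP hp hq hp₁ hq₁ h with rfl | hadj
    · exact ⟨W', hW'.trans (Nat.le_succ _)⟩
    · exact ⟨.cons hadj W', Nat.succ_le_succ hW'⟩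

lemma dist_le_dist_add {P Q : Set (Esp d)} (hP : Convex ℝ P) (hPQ : PolyConnected (P + Q))
    {p q p' q' : Esp d} (hp : p ∈ P) (hq : q ∈ Q) (hp' : p' ∈ P) (hq' : q' ∈ Q)
    (hw : p + q ∈ polyVerts (P + Q)) (hw' : p' + q' ∈ polyVerts (P + Q)) :
    (polyGraph P).dist p p' ≤ (polyGraph (P + Q)).dist (p + q) (p' + q') := by
  obtain ⟨W, hW⟩ := (hPQ _ hw _ hw').exists_walk_length_eq_dist
  obtain ⟨W', hW'⟩ := exists_walk_length_le_of_walk_add hP W hw' hp hq hp' hq' rfl rfl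
  exact (SimpleGraph.dist_le W').trans (hW'.trans hW.le)

lemma dist_le_polyDiam {P : Set (Esp d)} (hfin : (polyVerts P).Finite) {u v : Esp d}
    (hu : u ∈ polyVerts P) (hv : v ∈ polyVerts P) : (polyGraph P).dist u v ≤ polyDiam P := by
  refine le_csSup ((hfin.image2 (fun u v => (polyGraph P).dist u v) hfin).subset ?_).bddAbove
    ⟨u, hu, v, hv, rfl⟩
  rintro _ ⟨u, hu, v, hv, rfl⟩
  exact ⟨u, hu, v, hv, rfl⟩

lemma polyDiam_le {P : Set (Esp d)} {n : ℕ}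
    (h : ∀ u ∈ polyVerts P, ∀ v ∈ polyVerts P, (polyGraph P).dist u v ≤ n) : polyDiam P ≤ n := by
  refine csSup_le' ?_
  rintro _ ⟨u, hu, v, hv, rfl⟩
  exact h u hu v hv

lemma polyDiam_le_polyDiam_add (sP : Finset (Esp d)) {sQ : Finset (Esp d)} (hsQ : sQ.Nonempty) :
    polyDiam (convexHull ℝ (sP : Set (Esp d))) ≤
      polyDiam (convexHull ℝ (sP : Set (Esp d)) + convexHull ℝ (sQ : Set (Esp d))) := by
  have hsum : convexHull ℝ (sP : Set (Esp d)) + convexHull ℝ (sQ : Set (Esp d)) =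
      convexHull ℝ ((sP + sQ : Finset (Esp d)) : Set (Esp d)) := by
    rw [Finset.coe_add, convexHull_add]
  have hfin :
      (polyVerts (convexHull ℝ (sP : Set (Esp d)) + convexHull ℝ (sQ : Set (Esp d)))).Finite :=
    hsum ▸ (sP + sQ).finite_toSet.subset extremePoints_convexHull_subset
  have hQ := sQ.finite_toSet.isCompact_convexHull ℝ
  have hQne := (Finset.coe_nonempty.2 hsQ).convexHull (𝕜 := ℝ)
  refine polyDiam_le fun u hu v hv => ?_
  obtain ⟨q, hq, huq⟩ := exists_add_mem_polyVerts_add hu hQ hQne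
  obtain ⟨q', hq', hvq'⟩ := exists_add_mem_polyVerts_add hv hQ hQne
  exact (dist_le_dist_add (convex_convexHull ℝ _) (hsum ▸ polyConnected_convexHull (sP + sQ))
    hu.1 hq hv.1 hq' huq hvq').trans (dist_le_polyDiam hfin huq hvq')

end Polytope

theorem stmt1 {d : ℕ} (P Q : Set (Esp d)) (hP : IsPolytope P) (hQ : IsPolytope Q) :
    max (polyDiam P) (polyDiam Q) ≤ polyDiam (P + Q) := by
  obtain ⟨sP, hsP, rfl⟩ := hP
  obtain ⟨sQ, hsQ, rfl⟩ := hQ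
  refine max_le (polyDiam_le_polyDiam_add sP hsQ) ?_
  rw [add_comm]
  exact polyDiam_le_polyDiam_add sQ hsP
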